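/- arXiv:2412.19059 — 2 statements merged into one kernel-verified Lean document; each statement's English description precedes it below -/
import Mathlib

section
/- Let [uvw] be a triangle in an S₃-signed graph, with u,v of degree 3 having third neighbors u',v'. Suppose edges u'u, uw, wv, vv' are straight but edge uv is not straight (σ_{(u,v)} ≠ id). Then for any proper coloring φ of {u',v'}, there exist at least two colors c ∈ {1,2,3} such that φ extends to a proper 3-coloring of {u,v,w} with φ(w) = c. -/
/-- Lemma 2.1 (2): in the triangle `[u v w]` with straight edges `u'u`, `uw`, `wv`,
`vv'` but a non-straight edge `uv` (permutation `σ ≠ id`), for any colors `a`, `b` of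
the pendant neighbors there are at least two colors `c` for `w` admitting a proper
extension (`x` for `u`, `y` for `v`). -/
theorem nonstraight_triangle_two_colors (σ : Equiv.Perm (Fin 3)) (hσ : σ ≠ 1)
    (a b : Fin 3) :
    ∃ c₁ c₂ : Fin 3, c₁ ≠ c₂ ∧
      ∀ c : Fin 3, c = c₁ ∨ c = c₂ →
        ∃ x y : Fin 3, x ≠ a ∧ y ≠ b ∧ y ≠ σ x ∧ x ≠ c ∧ y ≠ c := by
  revert hσ; revert σ a b; decide
end

section
/- Let I_k be the S₃-signed graph consisting of k negative triangles T_i = [u_{i−1} u_i w_i] for i = 1,...,k, where each w_i has one additional neighbor w_i' outside I_k, u_k has one additional neighbor u_k' outside, and each u_i (1 ≤ i ≤ k−1) has degree 4 (only the edges shown). Then for any proper 3-coloring φ of the outside neighbors {w_1',...,w_k', u_k'}, there exist at least two colors c ∈ {1,2,3} such that φ can be extended to a proper 3-coloring of I_k with φ(u_0) = c. -/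
set_option maxHeartbeats 4000000 in
set_option synthInstance.maxHeartbeats 2000000 in
set_option synthInstance.maxSize 2000 in
private lemma Ik_core : ∀ (fw b₁ b₂ : Fin 3), ∀ (q : Fin 3 → Fin 3), Function.Injective q →
    (¬ ∀ x, q x = x) → b₁ ≠ b₂ →
    ∃ a₁ a₂ : Fin 3, a₁ ≠ a₂ ∧ ∀ a : Fin 3, a = a₁ ∨ a = a₂ →
      ∃ xw xu : Fin 3, (xu = b₁ ∨ xu = b₂) ∧ xu ≠ a ∧ xw ≠ a ∧ xu ≠ q xw ∧ xw ≠ fw := by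
  decide

private lemma Ik_two_ne : ∀ fu : Fin 3, ∃ b₁ b₂ : Fin 3, b₁ ≠ b₂ ∧ b₁ ≠ fu ∧ b₂ ≠ fu := by decide

private lemma Ik_third : ∀ a₁ a₂ : Fin 3, a₁ ≠ a₂ →
    ∃ a₃ : Fin 3, ∀ x : Fin 3, x ≠ a₃ → x = a₁ ∨ x = a₂ := by decide

private lemma Ik_step (f g h : Equiv.Perm (Fin 3)) (hneg : h * g ≠ f)
    (fw b₁ b₂ : Fin 3) (hb : b₁ ≠ b₂) :
    ∃ a₁ a₂ : Fin 3, a₁ ≠ a₂ ∧ ∀ a : Fin 3, a = a₁ ∨ a = a₂ →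
      ∃ xw xu : Fin 3, (xu = b₁ ∨ xu = b₂) ∧ xu ≠ f a ∧ xw ≠ g a ∧ xu ≠ h xw ∧ xw ≠ fw := by
  have hq : ¬ ∀ x, (f⁻¹ * h * g) x = x := by
    intro hx
    apply hneg
    ext x
    have h1 := hx x
    simp only [Equiv.Perm.mul_apply] at h1 ⊢
    have h2 : h (g x) = f x := by conv_rhs => rw [← h1]; simp
    exact congrArg Fin.val h2
  obtain ⟨a₁, a₂, ha, hP⟩ := Ik_core (g⁻¹ fw) (f⁻¹ b₁) (f⁻¹ b₂) (⇑(f⁻¹ * h * g))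
    (Equiv.injective _) hq (fun e => hb (by simpa using (Equiv.injective f⁻¹ e)))
  refine ⟨a₁, a₂, ha, ?_⟩
  intro a hca
  obtain ⟨yw, yu, hyb, h1, h2, h3, h4⟩ := hP a hca
  refine ⟨g yw, f yu, ?_, ?_, ?_, ?_, ?_⟩
  · rcases hyb with e | e <;> [left; right] <;> simp [e]
  · exact fun e => h1 (f.injective e)
  · exact fun e => h2 (g.injective e)
  · intro e
    apply h3
    simp only [Equiv.Perm.mul_apply]
    rw [← e]
    simp
  · intro e
    apply h4
    rw [← e]
    simp

private lemma Ik_aux (k : ℕ) :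
    ∀ (σuu σuw σwu : Fin k → Equiv.Perm (Fin 3)),
    (∀ i : Fin k, σwu i * σuw i ≠ σuu i) →
    ∀ (fw : Fin k → Fin 3) (fu : Fin 3),
    ∃ c₁ c₂ : Fin 3, c₁ ≠ c₂ ∧
      ∀ c : Fin 3, c = c₁ ∨ c = c₂ →
        ∃ (φu : Fin (k + 1) → Fin 3) (φw : Fin k → Fin 3),
          φu 0 = c ∧
          φu (Fin.last k) ≠ fu ∧
          ∀ i : Fin k,
            φu i.succ ≠ σuu i (φu i.castSucc) ∧
            φw i ≠ σuw i (φu i.castSucc) ∧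
            φu i.succ ≠ σwu i (φw i) ∧
            φw i ≠ fw i := by
  induction k with
  | zero =>
    intro σuu σuw σwu hneg fw fu
    obtain ⟨b₁, b₂, hb, hb1, hb2⟩ := Ik_two_ne fu
    refine ⟨b₁, b₂, hb, ?_⟩
    intro c hc
    refine ⟨fun _ => c, fun i => i.elim0, rfl, ?_, fun i => i.elim0⟩
    rcases hc with rfl | rfl <;> assumption
  | succ n ih =>
    intro σuu σuw σwu hneg fw fu
    set L : Fin (n + 1) := Fin.last n with hL
    obtain ⟨b₁, b₂, hb, hb1, hb2⟩ := Ik_two_ne fu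
    obtain ⟨a₁, a₂, ha, hStep⟩ := Ik_step (σuu L) (σuw L) (σwu L) (hneg L) (fw L) b₁ b₂ hb
    obtain ⟨a₃, ha3⟩ := Ik_third a₁ a₂ ha
    obtain ⟨c₁, c₂, hc, hExt⟩ := ih (fun i => σuu i.castSucc) (fun i => σuw i.castSucc)
      (fun i => σwu i.castSucc) (fun i => hneg i.castSucc) (fun i => fw i.castSucc) a₃
    refine ⟨c₁, c₂, hc, ?_⟩
    intro c hcc
    obtain ⟨φu, φw, h0, hlast, htri⟩ := hExt c hcc
    obtain ⟨xw, xu, hxb, hx1, hx2, hx3, hx4⟩ := hStep (φu (Fin.last n)) (ha3 _ hlast)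
    refine ⟨Fin.snoc φu xu, Fin.snoc φw xw, ?_, ?_, ?_⟩
    · rw [show (0 : Fin (n + 2)) = Fin.castSucc 0 from rfl, Fin.snoc_castSucc]
      exact h0
    · rw [Fin.snoc_last]
      rcases hxb with rfl | rfl <;> assumption
    · intro i
      refine Fin.lastCases ?_ ?_ i
      · simp only [hL, Fin.succ_last, Fin.snoc_last, Fin.snoc_castSucc]
        exact ⟨hx1, hx2, hx3, hx4⟩
      · intro j
        simp only [Fin.succ_castSucc, Fin.snoc_castSucc]
        exact htri j


/-- Lemma on the configuration `I_k`: it consists of `k` negative triangles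
`T_i = [u_{i-1} u_i w_i]`; the permutation on the edge `(u_{i-1}, u_i)` is `σuu i`,
on `(u_{i-1}, w_i)` it is `σuw i`, and on `(w_i, u_i)` it is `σwu i`; negativity of
`T_i` means `σwu i * σuw i ≠ σuu i`. The precolored outside neighbors forbid at each
`w_i` the single color `fw i` and at `u_k` the color `fu`. Then there are at least
two colors `c` such that the precoloring extends to a proper 3-coloring of `I_k` with
`φ u₀ = c`. -/
theorem Ik_port_two_colors (k : ℕ) (hk : 1 ≤ k)
    (σuu σuw σwu : Fin k → Equiv.Perm (Fin 3))
    (hneg : ∀ i : Fin k, σwu i * σuw i ≠ σuu i)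
    (fw : Fin k → Fin 3) (fu : Fin 3) :
    ∃ c₁ c₂ : Fin 3, c₁ ≠ c₂ ∧
      ∀ c : Fin 3, c = c₁ ∨ c = c₂ →
        ∃ (φu : Fin (k + 1) → Fin 3) (φw : Fin k → Fin 3),
          φu 0 = c ∧
          φu (Fin.last k) ≠ fu ∧
          ∀ i : Fin k,
            φu i.succ ≠ σuu i (φu i.castSucc) ∧
            φw i ≠ σuw i (φu i.castSucc) ∧
            φu i.succ ≠ σwu i (φw i) ∧
            φw i ≠ fw i := by
  exact Ik_aux k σuu σuw σwu hneg fw fu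
end
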